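/- Fix m ≥ 1 and 1 ≤ k ≤ m. In the B^{HF}_m-bimodule P_k^{HF} ⊗_𝔽 _kP^{HF}, the element c := u*⊗u + v*⊗v satisfies b·c = c·b for every b ∈ B^{HF}_m. Consequently the map γ_k^{HF}: B^{HF}_m → P_k^{HF} ⊗_𝔽 _kP^{HF} defined by γ_k^{HF}(b) := b·c is a homomorphism of B^{HF}_m-bimodules, and it satisfies γ_k^{HF}(1_{kk}) = u*⊗u, γ_k^{HF}(1_{k-1,k-1}) = v*⊗v, γ_k^{HF}(1_{ii}) = 0 for i ∉ {k-1, k}, and γ_k^{HF}(ρ_{k,k-1}) = γ_k^{HF}(σ_{k,k-1}) = u*⊗v. -/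

import Mathlib

/-! The actions of `B^{HF}_m` on `P_k^{HF} ⊗ _kP^{HF}` only read the entries of a matrix at
`(k,k)`, `(k,k-1)` and `(k-1,k-1)`. Since `k-1 ⋖ k`, these entries of a product of lower
triangular matrices only involve the same entries of the factors, and because diagonal entries
of `B^{HF}_m` are scalars `(c,c)` the coordinate formulas are genuine left actions, commuting with
the right actions. Centrality of `c` is a direct check, and then
`γ(b₁ b b₂) = (b₁ b)·(b₂·c) = (b₁ b)·(c·b₂) = (b₁·(b·c))·b₂`. -/

set_option maxHeartbeats 1000000

open Matrix

noncomputable section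

namespace Stmt11
abbrev 𝔽 : Type := ZMod 2

/-- `𝔽[X]/(X²)`, modeled as the dual numbers over `𝔽 = ℤ/2ℤ`. -/
abbrev D : Type := DualNumber 𝔽

/-- The element `x + y·X` of `𝔽[X]/(X²)`. -/
def dn (x y : 𝔽) : D := TrivSqZeroExt.inl x + TrivSqZeroExt.inr y

abbrev MKh (m : ℕ) : Type := Matrix (Fin (m + 1)) (Fin (m + 1)) D
abbrev MHF (m : ℕ) : Type := Matrix (Fin (m + 1)) (Fin (m + 1)) (𝔽 × 𝔽)

/-- `B^{Kh}_m`: lower triangular `(m+1)×(m+1)` matrices over `𝔽[X]/(X²)` whose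
diagonal entries lie in `{0,1}`. -/
def BKh (m : ℕ) : Set (MKh m) :=
  {M | (∀ i j, i < j → M i j = 0) ∧ (∀ i, M i i = 0 ∨ M i i = 1)}

/-- `B^{HF}_m`: lower triangular `(m+1)×(m+1)` matrices over `𝔽 × 𝔽` whose
diagonal entries lie in `{(0,0),(1,1)}`. -/
def BHF (m : ℕ) : Set (MHF m) :=
  {M | (∀ i j, i < j → M i j = 0) ∧ (∀ i, M i i = 0 ∨ M i i = 1)}

open Fin.NatCast in
/-- The index `k` as an element of `Fin (m+1)`. -/
def idx (m k : ℕ) : Fin (m + 1) := (k : Fin (m + 1))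

/-- The left action of `B^{Kh}_m` on `P_k^{Kh}`; an element `α·u* + β·v*` is
recorded by its coordinates `(α, β)` in the basis `u*, v*`.  This is the unique
bilinear extension of the action table `1_{kk}·u* = u*`, `1_{k-1,k-1}·v* = v*`,
`x_{k,k-1}·v* = u*`, all other actions of pairs of basis elements being `0`. -/
def lActKh (m k : ℕ) (b : MKh m) (p : 𝔽 × 𝔽) : 𝔽 × 𝔽 :=
  ((b (idx m k) (idx m k)).fst * p.1 + (b (idx m k) (idx m (k - 1))).snd * p.2,
   (b (idx m (k - 1)) (idx m (k - 1))).fst * p.2)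

/-- The right action of `B^{Kh}_m` on `_kP^{Kh}`; an element `γ·u + δ·v` is
recorded by its coordinates `(γ, δ)` in the basis `u, v`.  This is the unique
bilinear extension of the action table `u·1_{kk} = u`, `u·x_{k,k-1} = v`,
`v·1_{k-1,k-1} = v`, all other actions of pairs of basis elements being `0`. -/
def rActKh (m k : ℕ) (q : 𝔽 × 𝔽) (a : MKh m) : 𝔽 × 𝔽 :=
  (q.1 * (a (idx m k) (idx m k)).fst,
   q.1 * (a (idx m k) (idx m (k - 1))).snd + q.2 * (a (idx m (k - 1)) (idx m (k - 1))).fst)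

/-- The left action of `B^{HF}_m` on `P_k^{HF}` (coordinates in the basis `u*, v*`):
the bilinear extension of `1_{kk}·u* = u*`, `1_{k-1,k-1}·v* = v*`,
`ρ_{k,k-1}·v* = σ_{k,k-1}·v* = u*`, all other actions of basis elements being `0`. -/
def lActHF (m k : ℕ) (b : MHF m) (p : 𝔽 × 𝔽) : 𝔽 × 𝔽 :=
  ((b (idx m k) (idx m k)).1 * p.1
      + ((b (idx m k) (idx m (k - 1))).1 + (b (idx m k) (idx m (k - 1))).2) * p.2,
   (b (idx m (k - 1)) (idx m (k - 1))).1 * p.2)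

/-- The right action of `B^{HF}_m` on `_kP^{HF}` (coordinates in the basis `u, v`):
the bilinear extension of `u·1_{kk} = u`, `u·ρ_{k,k-1} = u·σ_{k,k-1} = v`,
`v·1_{k-1,k-1} = v`, all other actions of basis elements being `0`. -/
def rActHF (m k : ℕ) (q : 𝔽 × 𝔽) (a : MHF m) : 𝔽 × 𝔽 :=
  (q.1 * (a (idx m k) (idx m k)).1,
   q.1 * ((a (idx m k) (idx m (k - 1))).1 + (a (idx m k) (idx m (k - 1))).2)
      + q.2 * (a (idx m (k - 1)) (idx m (k - 1))).1)

/-- The tensor product `P_k ⊗ _kP`: coordinates `(w₁, w₂, w₃, w₄)` in the basis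
`u*⊗u, u*⊗v, v*⊗u, v*⊗v`. -/
abbrev T4 : Type := 𝔽 × 𝔽 × 𝔽 × 𝔽

/-- Left action of `B^{Kh}_m` on `P_k^{Kh} ⊗ _kP^{Kh}`, via `b·(p⊗q) = (b·p)⊗q`. -/
def lActKhT (m k : ℕ) (b : MKh m) (w : T4) : T4 :=
  ((b (idx m k) (idx m k)).fst * w.1 + (b (idx m k) (idx m (k - 1))).snd * w.2.2.1,
   (b (idx m k) (idx m k)).fst * w.2.1 + (b (idx m k) (idx m (k - 1))).snd * w.2.2.2,
   (b (idx m (k - 1)) (idx m (k - 1))).fst * w.2.2.1,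
   (b (idx m (k - 1)) (idx m (k - 1))).fst * w.2.2.2)

/-- Right action of `B^{Kh}_m` on `P_k^{Kh} ⊗ _kP^{Kh}`, via `(p⊗q)·b = p⊗(q·b)`. -/
def rActKhT (m k : ℕ) (w : T4) (a : MKh m) : T4 :=
  (w.1 * (a (idx m k) (idx m k)).fst,
   w.1 * (a (idx m k) (idx m (k - 1))).snd + w.2.1 * (a (idx m (k - 1)) (idx m (k - 1))).fst,
   w.2.2.1 * (a (idx m k) (idx m k)).fst,
   w.2.2.1 * (a (idx m k) (idx m (k - 1))).snd + w.2.2.2 * (a (idx m (k - 1)) (idx m (k - 1))).fst)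

/-- Left action of `B^{HF}_m` on `P_k^{HF} ⊗ _kP^{HF}`. -/
def lActHFT (m k : ℕ) (b : MHF m) (w : T4) : T4 :=
  ((b (idx m k) (idx m k)).1 * w.1
      + ((b (idx m k) (idx m (k - 1))).1 + (b (idx m k) (idx m (k - 1))).2) * w.2.2.1,
   (b (idx m k) (idx m k)).1 * w.2.1
      + ((b (idx m k) (idx m (k - 1))).1 + (b (idx m k) (idx m (k - 1))).2) * w.2.2.2,
   (b (idx m (k - 1)) (idx m (k - 1))).1 * w.2.2.1,
   (b (idx m (k - 1)) (idx m (k - 1))).1 * w.2.2.2)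

/-- Right action of `B^{HF}_m` on `P_k^{HF} ⊗ _kP^{HF}`. -/
def rActHFT (m k : ℕ) (w : T4) (a : MHF m) : T4 :=
  (w.1 * (a (idx m k) (idx m k)).1,
   w.1 * ((a (idx m k) (idx m (k - 1))).1 + (a (idx m k) (idx m (k - 1))).2)
      + w.2.1 * (a (idx m (k - 1)) (idx m (k - 1))).1,
   w.2.2.1 * (a (idx m k) (idx m k)).1,
   w.2.2.1 * ((a (idx m k) (idx m (k - 1))).1 + (a (idx m k) (idx m (k - 1))).2)
      + w.2.2.2 * (a (idx m (k - 1)) (idx m (k - 1))).1)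

/-- `γ_k^{Kh} : B^{Kh}_m → P_k^{Kh} ⊗ _kP^{Kh}`, `b ↦ b·(u*⊗u + v*⊗v)`. -/
def γKh (m k : ℕ) (b : MKh m) : T4 := lActKhT m k b (1, 0, 0, 1)

/-- `γ_k^{HF} : B^{HF}_m → P_k^{HF} ⊗ _kP^{HF}`, `b ↦ b·(u*⊗u + v*⊗v)`. -/
def γHF (m k : ℕ) (b : MHF m) : T4 := lActHFT m k b (1, 0, 0, 1)

/-- `(β_k^{Kh})_{(1|1|0)} : B^{Kh}_m ⊗ (P_k^{Kh} ⊗ _kP^{Kh}) → B^{Kh}_m`: the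
bilinear map given on pairs of basis elements by `(1_{ik}, u*⊗u) ↦ x_{ik}` (`i ≥ k+1`),
`(1_{i,k-1}, v*⊗u) ↦ 1_{ik}` (`i ≥ k`), `(x_{i,k-1}, v*⊗u) ↦ x_{ik}` (`i ≥ k+1`),
`(1_{i,k-1}, v*⊗v) ↦ x_{i,k-1}` (`i ≥ k`), all other values being `0`. -/
def βKh1 (m k : ℕ) (b : MKh m) (w : T4) : MKh m :=
  (∑ i : Fin (m + 1), if k < (i : ℕ) then
      Matrix.single i (idx m k)
        (dn ((b i (idx m (k - 1))).fst * w.2.2.1)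
            ((b i (idx m k)).fst * w.1 + (b i (idx m (k - 1))).snd * w.2.2.1)) else 0)
  + Matrix.single (idx m k) (idx m k) (dn ((b (idx m k) (idx m (k - 1))).fst * w.2.2.1) 0)
  + ∑ i : Fin (m + 1), if k ≤ (i : ℕ) then
      Matrix.single i (idx m (k - 1)) (dn 0 ((b i (idx m (k - 1))).fst * w.2.2.2)) else 0

/-- `(β_k^{Kh})_{(0|1|1)} : (P_k^{Kh} ⊗ _kP^{Kh}) ⊗ B^{Kh}_m → B^{Kh}_m`: the
bilinear map given on pairs of basis elements by `(u*⊗u, 1_{kj}) ↦ x_{kj}` (`j ≤ k-1`),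
`(v*⊗u, 1_{kj}) ↦ 1_{k-1,j}` (`j ≤ k-1`), `(v*⊗u, x_{kj}) ↦ x_{k-1,j}` (`j ≤ k-2`),
`(v*⊗v, 1_{k-1,j}) ↦ x_{k-1,j}` (`j ≤ k-2`), all other values being `0`. -/
def βKh2 (m k : ℕ) (w : T4) (a : MKh m) : MKh m :=
  (∑ j : Fin (m + 1), if (j : ℕ) < k then
      Matrix.single (idx m k) j (dn 0 (w.1 * (a (idx m k) j).fst)) else 0)
  + (∑ j : Fin (m + 1), if (j : ℕ) < k then
      Matrix.single (idx m (k - 1)) j (dn (w.2.2.1 * (a (idx m k) j).fst) 0) else 0)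
  + ∑ j : Fin (m + 1), if (j : ℕ) < k - 1 then
      Matrix.single (idx m (k - 1)) j
        (dn 0 (w.2.2.1 * (a (idx m k) j).snd + w.2.2.2 * (a (idx m (k - 1)) j).fst)) else 0

/-- `(β_k^{HF})_{(1|1|0)} : B^{HF}_m ⊗ (P_k^{HF} ⊗ _kP^{HF}) → B^{HF}_m`: the
bilinear map given on pairs of basis elements by `(ρ_{ik}, u*⊗u) ↦ ρ_{ik}` (`i ≥ k+1`),
`(σ_{k,k-1}, v*⊗u) ↦ 1_{kk}`, `(ρ_{i,k-1}, v*⊗u) ↦ ρ_{ik}` (`i ≥ k+1`),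
`(σ_{i,k-1}, v*⊗u) ↦ σ_{ik}` (`i ≥ k+1`), `(ρ_{i,k-1}, v*⊗v) ↦ ρ_{i,k-1}` (`i ≥ k`),
all other values being `0`. -/
def βHF1 (m k : ℕ) (b : MHF m) (w : T4) : MHF m :=
  (∑ i : Fin (m + 1), if k < (i : ℕ) then
      Matrix.single i (idx m k)
        ((b i (idx m k)).1 * w.1 + (b i (idx m (k - 1))).1 * w.2.2.1,
         (b i (idx m (k - 1))).2 * w.2.2.1) else 0)
  + Matrix.single (idx m k) (idx m k)
      ((b (idx m k) (idx m (k - 1))).2 * w.2.2.1, (b (idx m k) (idx m (k - 1))).2 * w.2.2.1)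
  + ∑ i : Fin (m + 1), if k ≤ (i : ℕ) then
      Matrix.single i (idx m (k - 1)) ((b i (idx m (k - 1))).1 * w.2.2.2, 0) else 0

/-- `(β_k^{HF})_{(0|1|1)} : (P_k^{HF} ⊗ _kP^{HF}) ⊗ B^{HF}_m → B^{HF}_m`: the
bilinear map given on pairs of basis elements by `(u*⊗u, ρ_{kj}) ↦ ρ_{kj}` (`j ≤ k-1`),
`(v*⊗u, σ_{k,k-1}) ↦ 1_{k-1,k-1}`, `(v*⊗u, ρ_{kj}) ↦ ρ_{k-1,j}` (`j ≤ k-2`),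
`(v*⊗u, σ_{kj}) ↦ σ_{k-1,j}` (`j ≤ k-2`), `(v*⊗v, ρ_{k-1,j}) ↦ ρ_{k-1,j}` (`j ≤ k-2`),
all other values being `0`. -/
def βHF2 (m k : ℕ) (w : T4) (a : MHF m) : MHF m :=
  (∑ j : Fin (m + 1), if (j : ℕ) < k then
      Matrix.single (idx m k) j (w.1 * (a (idx m k) j).1, 0) else 0)
  + Matrix.single (idx m (k - 1)) (idx m (k - 1))
      (w.2.2.1 * (a (idx m k) (idx m (k - 1))).2, w.2.2.1 * (a (idx m k) (idx m (k - 1))).2)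
  + ∑ j : Fin (m + 1), if (j : ℕ) < k - 1 then
      Matrix.single (idx m (k - 1)) j
        (w.2.2.1 * (a (idx m k) j).1 + w.2.2.2 * (a (idx m (k - 1)) j).1,
         w.2.2.1 * (a (idx m k) j).2) else 0

/-- The left action on the mapping cone `(P_k^{Kh} ⊗ _kP^{Kh}) ⊕ B^{Kh}_m`,
`a·(w, b) := (a·w, β₁(a,w) + a·b)`. -/
def coneLKh (m k : ℕ) (a : MKh m) (p : T4 × MKh m) : T4 × MKh m :=
  (lActKhT m k a p.1, βKh1 m k a p.1 + a * p.2)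

/-- The right action on the mapping cone, `(w, b)·a := (w·a, β₂(w,a) + b·a)`. -/
def coneRKh (m k : ℕ) (p : T4 × MKh m) (a : MKh m) : T4 × MKh m :=
  (rActKhT m k p.1 a, βKh2 m k p.1 a + p.2 * a)

def coneLHF (m k : ℕ) (a : MHF m) (p : T4 × MHF m) : T4 × MHF m :=
  (lActHFT m k a p.1, βHF1 m k a p.1 + a * p.2)

def coneRHF (m k : ℕ) (p : T4 × MHF m) (a : MHF m) : T4 × MHF m :=
  (rActHFT m k p.1 a, βHF2 m k p.1 a + p.2 * a)

/-- The degree-0 identification `ℱ₀(B^{HF}_m) ≅ (degree-0 part of B^{Kh}_m)`,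
sending `1_{ii}, 1_{ij} = ρ_{ij} + σ_{ij}` to `1_{ii}, 1_{ij}`: on matrix entries,
`(c, c) ↦ c`. -/
def σ0 (m : ℕ) (M : MHF m) : MKh m := Matrix.of fun i j => dn ((M i j).1) 0

/-- The degree-1 identification `ℱ₁/ℱ₀(B^{HF}_m) ≅ (degree-1 part of B^{Kh}_m)`,
sending the class `[ρ_{ij}]` to `x_{ij}`: on matrix entries, `(r, s) ↦ (r+s)·X`
(which kills `ℱ₀` and sends `ρ_{ij}`, and any representative of `[ρ_{ij}]`, to `x_{ij}`). -/
def σ1 (m : ℕ) (M : MHF m) : MKh m := Matrix.of fun i j => dn 0 ((M i j).1 + (M i j).2)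

/-- `ℱ₀(B^{HF}_m)`: the 𝔽-span of the `1_{ii}` and the `1_{ij} = ρ_{ij} + σ_{ij}`,
i.e. lower triangular matrices all of whose entries lie in `𝔽·(1,1)`. -/
def F0HF (m : ℕ) : Set (MHF m) :=
  {M | (∀ i j, i < j → M i j = 0) ∧ ∀ i j, (M i j).1 = (M i j).2}

/-- The filtration `ℱ_{-1} = 0 ⊆ ℱ₀ ⊆ ℱ₁ = B^{HF}_m` (with `ℱ_n = B^{HF}_m` for
`n ≥ 1` and `ℱ_n = 0` for `n ≤ -1`). -/
def FiltB (m : ℕ) : ℤ → Set (MHF m) := fun n =>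
  if n < 0 then {0} else if n = 0 then F0HF m else BHF m

/-- The filtration on `P_k^{HF} ⊗ _kP^{HF}`:
`ℱ₀ = 𝔽·(v*⊗u) ⊆ ℱ₁ = span{v*⊗u, v*⊗v, u*⊗u} ⊆ ℱ₂ = everything`. -/
def FiltT : ℤ → Set T4 := fun n =>
  if n < 0 then {0}
  else if n = 0 then {w | w.1 = 0 ∧ w.2.1 = 0 ∧ w.2.2.2 = 0}
  else if n = 1 then {w | w.2.1 = 0}
  else Set.univ

/-- The identification of `ℱ₁/ℱ₀(P_k^{HF} ⊗ _kP^{HF})` with the degree-1 part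
`span{u*⊗u, v*⊗v}` of `P_k^{Kh} ⊗ _kP^{Kh}`: the class of `w` is recorded by its
`u*⊗u` and `v*⊗v` coordinates. -/
def θ1 (w : T4) : T4 := (w.1, 0, 0, w.2.2.2)

end Stmt11

namespace Matrix.IsLowerTriangular

variable {n R : Type*} [Fintype n] [LinearOrder n] [NonUnitalNonAssocSemiring R]
  {X Y : Matrix n n R}

theorem mul_apply_self (hX : X.IsLowerTriangular) (hY : Y.IsLowerTriangular) (i : n) :
    (X * Y) i i = X i i * Y i i := by
  rw [Matrix.mul_apply, Finset.sum_eq_single i]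
  · intro l _ hl
    rcases lt_or_gt_of_ne hl with h | h
    · rw [hY h, mul_zero]
    · rw [hX h, zero_mul]
  · simp

theorem mul_apply_of_covBy (hX : X.IsLowerTriangular) (hY : Y.IsLowerTriangular) {i j : n}
    (hji : j ⋖ i) : (X * Y) i j = X i j * Y j j + X i i * Y i j := by
  rw [Matrix.mul_apply, ← Finset.sum_pair (f := fun l => X i l * Y l j) hji.ne]
  refine (Finset.sum_subset (Finset.subset_univ _) fun l _ hl => ?_).symm
  simp only [Finset.mem_insert, Finset.mem_singleton, not_or] at hl
  rcases lt_or_gt_of_ne hl.1 with hlj | hjl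
  · rw [hY hlj, mul_zero]
  · have hil : i < l := lt_of_le_of_ne (hji.ge_of_gt hjl) (Ne.symm hl.2)
    rw [hX hil, zero_mul]

end Matrix.IsLowerTriangular

namespace Stmt11

section

variable {m k : ℕ}

theorem diag_fst_eq_snd_of_mem_BHF {b : MHF m} (hb : b ∈ BHF m) (i : Fin (m + 1)) :
    (b i i).1 = (b i i).2 := by
  rcases hb.2 i with h | h <;> rw [h] <;> rfl

theorem mul_mem_BHF {b₁ b₂ : MHF m} (hb₁ : b₁ ∈ BHF m) (hb₂ : b₂ ∈ BHF m) :
    b₁ * b₂ ∈ BHF m := by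
  have h₁ : b₁.IsLowerTriangular := hb₁.1
  have h₂ : b₂.IsLowerTriangular := hb₂.1
  refine ⟨h₁.mul h₂, fun i => ?_⟩
  rw [h₁.mul_apply_self h₂]
  rcases hb₁.2 i with h | h <;> rw [h]
  · exact .inl (zero_mul _)
  · rw [one_mul]
    exact hb₂.2 i

theorem idx_val (hkm : k ≤ m) : (idx m k : ℕ) = k :=
  Fin.val_cast_of_lt (Nat.lt_succ_of_le hkm)

theorem idx_pred_covBy_idx (hk : 1 ≤ k) (hkm : k ≤ m) : idx m (k - 1) ⋖ idx m k := by
  rw [Fin.covBy_iff, idx_val hkm, idx_val (by omega), Nat.covBy_iff_add_one_eq]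
  omega

theorem lActHFT_rActHFT_comm (b a : MHF m) (w : T4) :
    lActHFT m k b (rActHFT m k w a) = rActHFT m k (lActHFT m k b w) a := by
  simp only [lActHFT, rActHFT]
  ring_nf

theorem lActHFT_one_zero_zero_one_eq_rActHFT (b : MHF m) :
    lActHFT m k b (1, 0, 0, 1) = rActHFT m k (1, 0, 0, 1) b := by
  simp only [lActHFT, rActHFT]
  ring_nf

theorem lActHFT_mul (hk : 1 ≤ k) (hkm : k ≤ m) {b₁ b₂ : MHF m} (hb₁ : b₁ ∈ BHF m)
    (hb₂ : b₂ ∈ BHF m) (w : T4) :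
    lActHFT m k (b₁ * b₂) w = lActHFT m k b₁ (lActHFT m k b₂ w) := by
  have h₁ : b₁.IsLowerTriangular := hb₁.1
  have h₂ : b₂.IsLowerTriangular := hb₂.1
  simp only [lActHFT, h₁.mul_apply_self h₂, h₁.mul_apply_of_covBy h₂ (idx_pred_covBy_idx hk hkm),
    Prod.fst_mul, Prod.snd_mul, Prod.fst_add, Prod.snd_add,
    ← diag_fst_eq_snd_of_mem_BHF hb₁, ← diag_fst_eq_snd_of_mem_BHF hb₂]
  ring_nf

theorem γHF_mul_mul (hk : 1 ≤ k) (hkm : k ≤ m) {b₁ b b₂ : MHF m} (hb₁ : b₁ ∈ BHF m)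
    (hb : b ∈ BHF m) (hb₂ : b₂ ∈ BHF m) :
    γHF m k (b₁ * b * b₂) = rActHFT m k (lActHFT m k b₁ (γHF m k b)) b₂ := by
  rw [γHF, lActHFT_mul hk hkm (mul_mem_BHF hb₁ hb) hb₂, lActHFT_one_zero_zero_one_eq_rActHFT,
    lActHFT_rActHFT_comm, lActHFT_mul hk hkm hb₁ hb, γHF]

theorem γHF_apply (b : MHF m) :
    γHF m k b = ((b (idx m k) (idx m k)).1,
      (b (idx m k) (idx m (k - 1))).1 + (b (idx m k) (idx m (k - 1))).2, 0,
      (b (idx m (k - 1)) (idx m (k - 1))).1) := by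
  simp [γHF, lActHFT]

end

theorem statement_11_general (m k : ℕ) (hk1 : 1 ≤ k) (hk2 : k ≤ m) :
    (∀ b ∈ BHF m, lActHFT m k b (1, 0, 0, 1) = rActHFT m k (1, 0, 0, 1) b) ∧
    (∀ b₁ ∈ BHF m, ∀ b ∈ BHF m, ∀ b₂ ∈ BHF m,
        γHF m k (b₁ * b * b₂) = rActHFT m k (lActHFT m k b₁ (γHF m k b)) b₂) ∧
    γHF m k (Matrix.single (idx m k) (idx m k) 1) = (1, 0, 0, 0) ∧
    γHF m k (Matrix.single (idx m (k - 1)) (idx m (k - 1)) 1) = (0, 0, 0, 1) ∧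
    (∀ i : Fin (m + 1), (i : ℕ) ≠ k - 1 → (i : ℕ) ≠ k →
        γHF m k (Matrix.single i i 1) = 0) ∧
    γHF m k (Matrix.single (idx m k) (idx m (k - 1)) ((1 : 𝔽), (0 : 𝔽))) = (0, 1, 0, 0) ∧
    γHF m k (Matrix.single (idx m k) (idx m (k - 1)) ((0 : 𝔽), (1 : 𝔽))) = (0, 1, 0, 0) := by
  have hne := (idx_pred_covBy_idx hk1 hk2).ne'
  refine ⟨fun b _ => lActHFT_one_zero_zero_one_eq_rActHFT b,
    fun b₁ hb₁ b hb b₂ hb₂ => γHF_mul_mul hk1 hk2 hb₁ hb hb₂, ?_, ?_, fun i hi hi' => ?_, ?_, ?_⟩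
  · simp [γHF_apply, hne]
  · simp [γHF_apply, hne.symm]
  · have hik : i ≠ idx m k := fun h => hi' (by rw [h, idx_val hk2])
    have hik' : i ≠ idx m (k - 1) := fun h => hi (by rw [h, idx_val (by omega)])
    simp [γHF_apply, hik, hik']
  all_goals simp [γHF_apply, hne, hne.symm]

/-- In the `B^{HF}_m`-bimodule `P_k^{HF} ⊗ _kP^{HF}` the element
`c = u*⊗u + v*⊗v` (coordinates `(1,0,0,1)`) is central: `b·c = c·b` for every
`b ∈ B^{HF}_m`.  Consequently `γ_k^{HF}(b) := b·c` is a homomorphism of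
`B^{HF}_m`-bimodules, and it takes the stated values on basis elements. -/
theorem statement_11 (m k : ℕ) (hm : 1 ≤ m) (hk1 : 1 ≤ k) (hk2 : k ≤ m) :
    (∀ b ∈ BHF m, lActHFT m k b (1, 0, 0, 1) = rActHFT m k (1, 0, 0, 1) b) ∧
    (∀ b₁ ∈ BHF m, ∀ b ∈ BHF m, ∀ b₂ ∈ BHF m,
        γHF m k (b₁ * b * b₂) = rActHFT m k (lActHFT m k b₁ (γHF m k b)) b₂) ∧
    γHF m k (Matrix.single (idx m k) (idx m k) 1) = (1, 0, 0, 0) ∧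
    γHF m k (Matrix.single (idx m (k - 1)) (idx m (k - 1)) 1) = (0, 0, 0, 1) ∧
    (∀ i : Fin (m + 1), (i : ℕ) ≠ k - 1 → (i : ℕ) ≠ k →
        γHF m k (Matrix.single i i 1) = 0) ∧
    γHF m k (Matrix.single (idx m k) (idx m (k - 1)) ((1 : 𝔽), (0 : 𝔽))) = (0, 1, 0, 0) ∧
    γHF m k (Matrix.single (idx m k) (idx m (k - 1)) ((0 : 𝔽), (1 : 𝔽))) = (0, 1, 0, 0) :=
  statement_11_general m k hk1 hk2

end Stmt11
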